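/- Summability of Sobolev weights for q ≥ 3: with w_{k,q} = (1+2k/(q−1))^{−1} b_{k,q}(ψ(·;a)) and d_{k,q} = (1+2k/(q−1)) C_k^{(q−1)/2}(1), for any a ∈ [−1,1] and integer q ≥ 3, the series Σ_{k=1}^∞ w_{k,q}² d_{k,q} converges. -/

import Mathlib

/-- The constant `α_{k,q} = Γ(k+1/2)²Γ((q−1)/2)²/(2πΓ(k+q/2)²)`. -/
noncomputable def alphaKQ (q : ℝ) (k : ℕ) : ℝ :=
  Real.Gamma ((k : ℝ) + 1 / 2) ^ 2 * Real.Gamma ((q - 1) / 2) ^ 2 /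
    (2 * Real.pi * Real.Gamma ((k : ℝ) + q / 2) ^ 2)

/-- Gegenbauer coefficients `b_{k,q}(ψ(·;a))` of the stereographic kernel. -/
noncomputable def bPsi (q a : ℝ) (k : ℕ) : ℝ :=
  if k % 2 = 0 then alphaKQ q (k / 2) * (2 * (k : ℝ) + q - 1) * (1 + a)
  else alphaKQ q (k / 2) * (k : ℝ) * (2 * (k : ℝ) + q - 1) * (1 - a) / ((k : ℝ) - 1 + q)

/-- Sobolev weights `w_{k,q} = (1+2k/(q−1))⁻¹ b_{k,q}(ψ(·;a))`. -/
noncomputable def wPsi (q a : ℝ) (k : ℕ) : ℝ :=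
  (1 + 2 * (k : ℝ) / (q - 1))⁻¹ * bPsi q a k

/-- Dimension constants `d_{k,q} = (1+2k/(q−1)) C_k^{(q−1)/2}(1)` with
`C_k^{(q−1)/2}(1) = Γ(k+q−1)/(Γ(q−1)k!)`. -/
noncomputable def dKQ (q : ℝ) (k : ℕ) : ℝ :=
  (1 + 2 * (k : ℝ) / (q - 1)) *
    (Real.Gamma ((k : ℝ) + q - 1) / (Real.Gamma (q - 1) * (Nat.factorial k : ℝ)))

/-!
Write `t_n = 1 + 2n/(q-1)` and `C_n = Γ(n+q-1)/(Γ(q-1) n!)`, so that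
`w_n² d_n = t_n⁻¹ b_n² C_n`.
Log-convexity of `Γ` gives `x^s Γ(x) ≤ Γ(x+s)` for `s ≥ 1`; with `x = k + 1/2`, `s = (q-1)/2`
(this is where `q ≥ 3` enters) it yields `α_{k,q} = O(k^{1-q})`, hence `b_n = O(n^{2-q})`.
Since `C_n = binom(n+q-2, q-2) = O(n^{q-2})` and `t_n⁻¹ = O(n⁻¹)`, the terms are `O(n^{1-q})`,
which is summable because `q - 1 ≥ 2`.
-/

open Real Asymptotics Filter Set

/-- Log-convexity of `Γ` at `x + 1 = (1 - 1/s) x + (1/s) (x + s)`, combined with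
`Γ (x + 1) = x Γ x`. -/
theorem Real.rpow_mul_Gamma_le_Gamma_add {x s : ℝ} (hx : 0 < x) (hs : 1 ≤ s) :
    x ^ s * Gamma x ≤ Gamma (x + s) := by
  have hs0 : 0 < s := by linarith
  have hΓx := Gamma_pos_of_pos hx
  have hconv := convexOn_log_Gamma.2 (mem_Ioi.2 hx) (mem_Ioi.2 (by linarith : 0 < x + s))
    (sub_nonneg.2 ((div_le_one hs0).2 hs)) (by positivity : 0 ≤ 1 / s) (by ring)
  have hmid : (1 - 1 / s) • x + (1 / s) • (x + s) = x + 1 := by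
    simp only [smul_eq_mul]; field_simp; ring
  rw [hmid] at hconv
  simp only [Function.comp_apply, smul_eq_mul, Gamma_add_one hx.ne',
    log_mul hx.ne' hΓx.ne'] at hconv
  rw [← log_le_log_iff (by positivity) (Gamma_pos_of_pos (by linarith)),
    log_mul (by positivity) hΓx.ne', log_rpow hx]
  have := mul_le_mul_of_nonneg_left hconv hs0.le
  field_simp at this
  linarith

theorem alphaKQ_nonneg (q : ℝ) (k : ℕ) : 0 ≤ alphaKQ q k := by
  unfold alphaKQ
  positivity

theorem alphaKQ_le {q : ℝ} (hq : 3 ≤ q) (k : ℕ) :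
    alphaKQ q k ≤ Gamma ((q - 1) / 2) ^ 2 / (2 * π) * ((k : ℝ) + 1 / 2) ^ (1 - q) := by
  set y : ℝ := k + 1 / 2
  have hy : 0 < y := by positivity
  have hΓ := rpow_mul_Gamma_le_Gamma_add hy (s := (q - 1) / 2) (by linarith)
  rw [show y + (q - 1) / 2 = k + q / 2 by ring] at hΓ
  have hsq : y ^ (q - 1) * Gamma y ^ 2 ≤ Gamma (k + q / 2) ^ 2 := by
    calc y ^ (q - 1) * Gamma y ^ 2 = (y ^ ((q - 1) / 2) * Gamma y) ^ 2 := by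
          rw [mul_pow, ← rpow_natCast (y ^ _), ← rpow_mul hy.le]; norm_num
      _ ≤ _ := pow_le_pow_left₀ (by positivity) hΓ 2
  calc alphaKQ q k
      = Gamma ((q - 1) / 2) ^ 2 / (2 * π) * (Gamma y ^ 2 / Gamma (k + q / 2) ^ 2) := by
        unfold alphaKQ; ring
    _ ≤ Gamma ((q - 1) / 2) ^ 2 / (2 * π) * (y ^ (q - 1))⁻¹ := by
        gcongr
        rw [div_le_iff₀ (by positivity), ← div_eq_inv_mul, le_div_iff₀ (by positivity)]
        linarith
    _ = _ := by rw [← rpow_neg hy.le, neg_sub]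

theorem isBigO_alphaKQ_div_two {q : ℝ} (hq : 3 ≤ q) :
    (fun n : ℕ => alphaKQ q (n / 2)) =O[atTop] fun n => (n : ℝ) ^ (1 - q) := by
  refine .of_bound (Gamma ((q - 1) / 2) ^ 2 / (2 * π) * 2 ^ (q - 1)) ?_
  filter_upwards [eventually_gt_atTop 0] with n hn
  have hn' : (0 : ℝ) < n := by exact_mod_cast hn
  have hhalf : (n : ℝ) / 2 ≤ ((n / 2 : ℕ) : ℝ) + 1 / 2 := by
    have : n ≤ 2 * (n / 2) + 1 := by omega
    have : (n : ℝ) ≤ 2 * ((n / 2 : ℕ) : ℝ) + 1 := by exact_mod_cast this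
    linarith
  rw [norm_of_nonneg (alphaKQ_nonneg q _), norm_of_nonneg (by positivity)]
  calc alphaKQ q (n / 2)
      ≤ Gamma ((q - 1) / 2) ^ 2 / (2 * π) * (((n / 2 : ℕ) : ℝ) + 1 / 2) ^ (1 - q) :=
        alphaKQ_le hq _
    _ ≤ Gamma ((q - 1) / 2) ^ 2 / (2 * π) * ((n : ℝ) / 2) ^ (1 - q) := by
        gcongr ?_ * ?_
        exact rpow_le_rpow_of_nonpos (by positivity) hhalf (by linarith)
    _ = _ := by
        rw [div_rpow hn'.le zero_le_two, show 1 - q = -(q - 1) by ring, rpow_neg zero_le_two,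
          div_inv_eq_mul]
        ring

theorem abs_bPsi_le {q a : ℝ} (hq : 1 ≤ q) (ha : a ∈ Icc (-1 : ℝ) 1) (n : ℕ) :
    |bPsi q a n| ≤ 2 * alphaKQ q (n / 2) * (2 * n + q - 1) := by
  obtain ⟨ha₁, ha₂⟩ := ha
  have hα := alphaKQ_nonneg q (n / 2)
  have hn : (0 : ℝ) ≤ n := n.cast_nonneg
  have hlin : 0 ≤ alphaKQ q (n / 2) * (2 * n + q - 1) := mul_nonneg hα (by linarith)
  unfold bPsi
  split_ifs with hpar
  · rw [abs_of_nonneg (mul_nonneg hlin (by linarith))]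
    nlinarith
  · have hn₁ : (1 : ℝ) ≤ n := by exact_mod_cast (by omega : 1 ≤ n)
    have hden : 0 < (n : ℝ) - 1 + q := by linarith
    have hfrac : (n : ℝ) / (n - 1 + q) ≤ 1 := (div_le_one hden).2 (by linarith)
    calc |alphaKQ q (n / 2) * n * (2 * n + q - 1) * (1 - a) / (n - 1 + q)|
        = |alphaKQ q (n / 2) * (2 * n + q - 1) * ((1 - a) * (n / (n - 1 + q)))| := by
          congr 1; ring
      _ ≤ alphaKQ q (n / 2) * (2 * n + q - 1) * (2 * 1) := by
          rw [abs_of_nonneg (mul_nonneg hlin (mul_nonneg (by linarith) (by positivity)))]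
          gcongr
          linarith
      _ = _ := by ring

theorem isBigO_bPsi {q a : ℝ} (hq : 3 ≤ q) (ha : a ∈ Icc (-1 : ℝ) 1) :
    (fun n : ℕ => bPsi q a n) =O[atTop] fun n => (n : ℝ) ^ (2 - q) := by
  have hb : (fun n : ℕ => bPsi q a n) =O[atTop]
      fun n => alphaKQ q (n / 2) * (2 * n + q - 1) := by
    refine .of_bound 2 (.of_forall fun n => ?_)
    have hlin : 0 ≤ 2 * (n : ℝ) + q - 1 := by linarith [n.cast_nonneg (α := ℝ)]
    rw [norm_eq_abs, norm_of_nonneg (mul_nonneg (alphaKQ_nonneg q _) hlin), ← mul_assoc]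
    exact abs_bPsi_le (by linarith) ha n
  have hlin : (fun n : ℕ => 2 * (n : ℝ) + q - 1) =O[atTop] fun n => (n : ℝ) := by
    refine .of_bound (q + 1) ?_
    filter_upwards [eventually_ge_atTop 1] with n hn
    have hn' : (1 : ℝ) ≤ n := by exact_mod_cast hn
    rw [norm_of_nonneg (by linarith), norm_of_nonneg (by linarith)]
    nlinarith
  refine (hb.trans ((isBigO_alphaKQ_div_two hq).mul hlin)).trans_eventuallyEq ?_
  filter_upwards [eventually_gt_atTop 0] with n hn
  rw [← rpow_add_one (by positivity), sub_add_eq_add_sub, one_add_one_eq_two]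

theorem isBigO_inv_one_add_two_mul_div {q : ℝ} (hq : 1 < q) :
    (fun n : ℕ => (1 + 2 * (n : ℝ) / (q - 1))⁻¹) =O[atTop]
      fun n => (n : ℝ) ^ (-1 : ℝ) := by
  refine .of_bound ((q - 1) / 2) ?_
  filter_upwards [eventually_gt_atTop 0] with n hn
  have hn' : (0 : ℝ) < n := by exact_mod_cast hn
  have hq' : 0 < q - 1 := by linarith
  rw [rpow_neg_one, norm_inv, norm_inv, norm_of_nonneg (by positivity), norm_of_nonneg hn'.le]
  calc (1 + 2 * (n : ℝ) / (q - 1))⁻¹ ≤ (2 * n / (q - 1))⁻¹ :=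
        inv_anti₀ (by positivity) (by linarith)
    _ = _ := by field_simp

theorem Gamma_add_div_Gamma_mul_factorial (m n : ℕ) :
    Gamma (n + m + 1) / (Gamma (m + 1) * n.factorial) = (n + m).choose m := by
  rw [← Nat.choose_symm_add, Nat.cast_add_choose,
    show (n : ℝ) + m + 1 = (n + m : ℕ) + 1 by push_cast; ring,
    Gamma_nat_eq_factorial, Gamma_nat_eq_factorial, mul_comm]

theorem isBigO_add_choose (m : ℕ) :
    (fun n : ℕ => ((n + m).choose m : ℝ)) =O[atTop] fun n => (n : ℝ) ^ m := by
  refine .of_bound ((m + 1) ^ m) ?_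
  filter_upwards [eventually_ge_atTop 1] with n hn
  have hn' : (1 : ℝ) ≤ n := by exact_mod_cast hn
  rw [norm_of_nonneg (by positivity), norm_of_nonneg (by positivity), ← mul_pow]
  calc ((n + m).choose m : ℝ) ≤ ((n + m : ℕ) : ℝ) ^ m := by
        exact_mod_cast Nat.choose_le_pow (n + m) m
    _ ≤ ((m + 1) * n) ^ m := by
        push_cast
        gcongr
        nlinarith

theorem isBigO_Gamma_add_div_Gamma_mul_factorial (q : ℕ) (hq : 2 ≤ q) :
    (fun n : ℕ => Gamma (n + q - 1) / (Gamma (q - 1) * n.factorial)) =O[atTop]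
      fun n => (n : ℝ) ^ ((q : ℝ) - 2) := by
  obtain ⟨m, rfl⟩ : ∃ m, q = m + 2 := ⟨q - 2, by omega⟩
  convert isBigO_add_choose m using 2 with n n
  · rw [← Gamma_add_div_Gamma_mul_factorial]
    push_cast
    ring_nf
  · rw [← rpow_natCast]
    push_cast
    ring_nf

theorem wPsi_sq_mul_dKQ {q : ℝ} (hq : 1 < q) (a : ℝ) (n : ℕ) :
    wPsi q a n ^ 2 * dKQ q n = (1 + 2 * n / (q - 1))⁻¹ * bPsi q a n ^ 2 *
      (Gamma (n + q - 1) / (Gamma (q - 1) * n.factorial)) := by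
  have ht : 1 + 2 * (n : ℝ) / (q - 1) ≠ 0 := by
    have : 0 < q - 1 := by linarith
    positivity
  unfold wPsi dKQ
  field_simp

theorem isBigO_wPsi_sq_mul_dKQ (q : ℕ) (hq : 3 ≤ q) {a : ℝ} (ha : a ∈ Icc (-1 : ℝ) 1) :
    (fun n : ℕ => wPsi q a n ^ 2 * dKQ q n) =O[atTop] fun n => (n : ℝ) ^ (1 - (q : ℝ)) := by
  have hq' : (3 : ℝ) ≤ q := by exact_mod_cast hq
  have hprod := ((isBigO_inv_one_add_two_mul_div (by linarith)).mul
    ((isBigO_bPsi hq' ha).pow 2)).mul (isBigO_Gamma_add_div_Gamma_mul_factorial q (by omega))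
  refine hprod.congr' (.of_forall fun n => (wPsi_sq_mul_dKQ (by linarith) a n).symm) ?_
  filter_upwards [eventually_gt_atTop 0] with n hn
  have hn' : (0 : ℝ) < n := by exact_mod_cast hn
  rw [← rpow_natCast, ← rpow_mul hn'.le, ← rpow_add hn', ← rpow_add hn']
  congr 1
  push_cast
  ring

/-- Summability of the Sobolev weights: for `q ≥ 3` and `a ∈ [−1,1]`,
`Σ_{k≥1} w_{k,q}² d_{k,q} < ∞`. -/
theorem summable_wPsi_sq_dKQ (q : ℕ) (hq : 3 ≤ q) (a : ℝ) (ha : a ∈ Set.Icc (-1 : ℝ) 1) :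
    Summable (fun k : ℕ => wPsi (q : ℝ) a (k + 1) ^ 2 * dKQ (q : ℝ) (k + 1)) := by
  have hq' : (3 : ℝ) ≤ q := by exact_mod_cast hq
  refine (summable_nat_add_iff 1).2 (summable_of_isBigO_nat ?_ (isBigO_wPsi_sq_mul_dKQ q hq ha))
  exact summable_nat_rpow.2 (by linarith)
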